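/- arXiv:2501.05201 — 15 statements merged into one kernel-verified Lean document; each statement's English description precedes it below -/
import Mathlib

section
/- If G is a {1}-inverse of A and A† is the Moore–Penrose inverse of A, then the 1-MP inverse X = G·A·A† satisfies A·X·A = A, X·A·X = X, and (A·X)* = A·X; i.e., X is a {1,2,3}-inverse of A. -/
theorem stmt0 {R : Type*} [Ring R] [StarRing R] (A G Ap X : R) (hG : A * G * A = A)
    (hp1 : A * Ap * A = A) (hp2 : Ap * A * Ap = Ap)
    (hp3 : star (A * Ap) = A * Ap) (hp4 : star (Ap * A) = Ap * A)
    (hX : X = G * A * Ap) :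
    A * X * A = A ∧ X * A * X = X ∧ star (A * X) = A * X := by
  subst hX
  have hAX : A * (G * A * Ap) = A * Ap := by
    calc A * (G * A * Ap) = (A * G * A) * Ap := by noncomm_ring
    _ = A * Ap := by rw [hG]
  refine ⟨?_, ?_, ?_⟩
  · calc A * (G * A * Ap) * A = A * Ap * A := by rw [hAX]
      _ = A := hp1
  · calc G * A * Ap * A * (G * A * Ap) = G * (A * Ap * A) * (G * A * Ap) := by noncomm_ring
      _ = G * (A * (G * A * Ap)) := by rw [hp1]; noncomm_ring
      _ = G * (A * Ap) := by rw [hAX]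
      _ = G * A * Ap := by noncomm_ring
  · rw [hAX, hp3]
end

section
/- A matrix W is a {1,2,3}-inverse of A if and only if W satisfies W·A·W = W and A·W = A·A†. -/
theorem stmt3 {R : Type*} [Ring R] [StarRing R] (A Ap W : R)
    (hp1 : A * Ap * A = A) (hp2 : Ap * A * Ap = Ap)
    (hp3 : star (A * Ap) = A * Ap) (hp4 : star (Ap * A) = Ap * A) :
    (A * W * A = A ∧ W * A * W = W ∧ star (A * W) = A * W) ↔
    (W * A * W = W ∧ A * W = A * Ap) := by
  constructor
  · rintro ⟨h1, h2, h3⟩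
    refine ⟨h2, ?_⟩
    have key : A * W = A * W * (A * Ap) := by
      conv_lhs => rw [← h3]
      conv_lhs => rw [← hp1]
      calc star (A * Ap * A * W) = star (A * Ap * (A * W)) := by rw [mul_assoc]
        _ = star (A * W) * star (A * Ap) := by rw [star_mul]
        _ = A * W * (A * Ap) := by rw [h3, hp3]
    have key2 : A * Ap = A * W * (A * Ap) := by
      conv_lhs => rw [← h1]
      rw [mul_assoc]
    rw [key, ← key2]
  · rintro ⟨h2, h4⟩
    refine ⟨?_, h2, ?_⟩
    · rw [h4, hp1]
    · rw [h4, hp3]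
end

section
/- Let X₀ = G·A·A† be a fixed 1-MP inverse of A (G a {1}-inverse). Then for every W, the element X₀ + (I − X₀·A)·W·A·X₀ is again of the form G'·A·A† for some {1}-inverse G' of A; conversely, every element of the form D·A·A† with A·D·A = A can be written as X₀ + (I − X₀·A)·W·A·X₀ for some W. -/
theorem stmt4 {R : Type*} [Ring R] [StarRing R] (A G Ap X₀ : R) (hG : A * G * A = A)
    (hp1 : A * Ap * A = A) (hp2 : Ap * A * Ap = Ap)
    (hp3 : star (A * Ap) = A * Ap) (hp4 : star (Ap * A) = Ap * A)
    (hX : X₀ = G * A * Ap) :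
    (∀ W : R, ∃ G' : R, A * G' * A = A ∧
      X₀ + (1 - X₀ * A) * W * A * X₀ = G' * A * Ap) ∧
    (∀ D : R, A * D * A = A → ∃ W : R,
      D * A * Ap = X₀ + (1 - X₀ * A) * W * A * X₀) := by
  subst hX
  have hG1 : ∀ x : R, A * (G * (A * x)) = A * x := by
    intro x; rw [← mul_assoc, ← mul_assoc, hG]
  have hG2 : A * (G * A) = A := by rw [← mul_assoc, hG]
  have hp11 : ∀ x : R, A * (Ap * (A * x)) = A * x := by
    intro x; rw [← mul_assoc, ← mul_assoc, hp1]
  have hp12 : A * (Ap * A) = A := by rw [← mul_assoc, hp1]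
  have hp21 : ∀ x : R, Ap * (A * (Ap * x)) = Ap * x := by
    intro x; rw [← mul_assoc, ← mul_assoc, hp2]
  have hp22 : Ap * (A * Ap) = Ap := by rw [← mul_assoc, hp2]
  constructor
  · intro W
    refine ⟨G * A * Ap + (1 - G * A * Ap * A) * W * A * (G * A * Ap), ?_, ?_⟩ <;>
      simp [mul_add, add_mul, mul_sub, sub_mul, mul_assoc, hG1, hG2, hp11, hp12, hp21, hp22]
  · intro D hD
    have hD1 : ∀ x : R, A * (D * (A * x)) = A * x := by
      intro x; rw [← mul_assoc, ← mul_assoc, hD]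
    have hD2 : A * (D * A) = A := by rw [← mul_assoc, hD]
    refine ⟨D * A * Ap - G * A * Ap, ?_⟩
    simp [mul_add, add_mul, mul_sub, sub_mul, mul_assoc, hG1, hG2, hp11, hp12, hp21, hp22,
      hD1, hD2]
end

section
/- For a {1}-inverse G of A, X = G·A·A† if and only if X = X·A·A† and X·A·A* = G·A·A*. -/
theorem stmt5 {R : Type*} [Ring R] [StarRing R] (A G Ap X : R) (hG : A * G * A = A)
    (hp1 : A * Ap * A = A) (hp2 : Ap * A * Ap = Ap)
    (hp3 : star (A * Ap) = A * Ap) (hp4 : star (Ap * A) = Ap * A) :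
    X = G * A * Ap ↔ (X = X * A * Ap ∧ X * A * star A = G * A * star A) := by
  have hp2' : Ap * (A * Ap) = Ap := by rw [← mul_assoc, hp2]
  have key : Ap * (A * star A) = star A := by
    have : star (Ap * (A * star A)) = star (star A) := by
      rw [star_mul, star_mul, star_star, mul_assoc, ← star_mul, hp4, ← mul_assoc, hp1]
    exact star_injective this
  have sA : star A * (star Ap * Ap) = Ap := by rw [← mul_assoc, ← star_mul, hp4, hp2]
  constructor
  · rintro rfl
    refine ⟨?_, ?_⟩
    · simp only [mul_assoc]; rw [hp2']
    · simp only [mul_assoc]; rw [key]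
  · rintro ⟨h1, h2⟩
    have h3 := congrArg (· * (star Ap * Ap)) h2
    simp only [mul_assoc] at h3
    rw [sA] at h3
    conv_lhs => rw [h1]
    simp only [mul_assoc]
    exact h3
end

section
/- Let A have Drazin inverse A^D with index k, and let G be a {1}-inverse of A. Then X = G·A·A^D is the unique solution of the system: X·A·X = X, X·A^k = G·A^k, and A·X = A·A^D. -/
theorem stmt6 {R : Type*} [Ring R] (A G D X : R) (k : ℕ) (hG : A * G * A = A)
    (hd1 : D * A ^ (k + 1) = A ^ k) (hd2 : D * A * D = D) (hd3 : A * D = D * A)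
    (hX : X = G * A * D) :
    (X * A * X = X ∧ X * A ^ k = G * A ^ k ∧ A * X = A * D) ∧
    (∀ Y : R, Y * A * Y = Y → Y * A ^ k = G * A ^ k → A * Y = A * D → Y = X) := by
  have hco : Commute A D := hd3
  have hd2' : D * (A * D) = D := by rw [← mul_assoc]; exact hd2
  have hAD : A * D * (A * D) = A * D := by
    rw [mul_assoc A D (A*D), hd2']
  have hid : ∀ n : ℕ, (A * D) ^ (n + 1) = A * D := by
    intro n
    induction n with
    | zero => simp
    | succ m ih => rw [pow_succ, ih, hAD]
  constructor
  · refine ⟨?_, ?_, ?_⟩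
    · rw [hX]
      have hga : A * (G * (A * D)) = A * D := by
        rw [← mul_assoc, ← mul_assoc, hG]
      calc G * A * D * A * (G * A * D)
          = G * (A * (D * (A * (G * (A * D))))) := by simp only [mul_assoc]
        _ = G * (A * (D * (A * D))) := by rw [hga]
        _ = G * (A * D) := by rw [hd2']
        _ = G * A * D := by rw [mul_assoc]
    · rw [hX, mul_assoc G A D, hd3, mul_assoc G (D*A) (A^k), mul_assoc D A,
        ← pow_succ', hd1]
    · rw [hX, ← mul_assoc, ← mul_assoc, hG]
  · intro Y hY1 hY2 hY3
    calc Y = Y * A * Y := hY1.symm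
      _ = Y * (A * D) := by rw [mul_assoc, hY3]
      _ = Y * (A * D) ^ (k + 1) := by rw [hid]
      _ = Y * A ^ (k + 1) * D ^ (k + 1) := by rw [hco.mul_pow, mul_assoc]
      _ = Y * A ^ k * A * D ^ (k + 1) := by rw [pow_succ, ← mul_assoc]
      _ = G * A ^ k * A * D ^ (k + 1) := by rw [hY2]
      _ = G * (A * D) ^ (k + 1) := by
            rw [mul_assoc G (A ^ k) A, ← pow_succ, mul_assoc, ← hco.mul_pow]
      _ = G * (A * D) := by rw [hid]
      _ = X := by rw [hX, mul_assoc]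
end

section
/- Let G be a {1}-inverse of A with Drazin inverse A^D of index k. Then G·A·A^D = A^D if and only if A^D·A^k = G·A^k. -/
theorem stmt8 {R : Type*} [Ring R] (A G D : R) (k : ℕ) (hG : A * G * A = A)
    (hd1 : D * A ^ (k + 1) = A ^ k) (hd2 : D * A * D = D) (hd3 : A * D = D * A) :
    G * A * D = D ↔ D * A ^ k = G * A ^ k := by
  have hC : Commute A D := hd3
  have hDn : ∀ n : ℕ, D ^ (n + 1) * A ^ n = D := by
    intro n
    induction n with
    | zero => simp
    | succ n ih =>
      calc D ^ (n + 2) * A ^ (n + 1)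
          = D * (D ^ (n + 1) * A ^ n) * A := by
            rw [pow_succ' D (n + 1), pow_succ A n]
            simp [mul_assoc]
        _ = D * D * A := by rw [ih]
        _ = D * (A * D) := by rw [mul_assoc, ← hd3]
        _ = D := by rw [← mul_assoc]; exact hd2
  constructor
  · intro h
    calc D * A ^ k = (G * A * D) * A ^ k := by rw [h]
      _ = G * (D * (A * A ^ k)) := by
            rw [mul_assoc, mul_assoc, ← mul_assoc A D, hd3, mul_assoc]
      _ = G * (D * A ^ (k + 1)) := by rw [pow_succ']
      _ = G * A ^ k := by rw [hd1]
  · intro h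
    calc G * A * D
        = G * A * (D ^ (k + 1) * A ^ k) := by rw [hDn k]
      _ = G * (D ^ (k + 1) * (A * A ^ k)) := by
            rw [mul_assoc, ← mul_assoc A, (hC.pow_right (k + 1)).eq, mul_assoc]
      _ = G * (D ^ k * (D * A ^ (k + 1))) := by
            rw [← pow_succ', pow_succ D, mul_assoc]
      _ = G * (A ^ k * D ^ k) := by rw [hd1, ← (hC.pow_pow k k).eq]
      _ = D * A ^ k * D ^ k := by rw [← mul_assoc, ← h]
      _ = D ^ (k + 1) * A ^ k := by
            rw [mul_assoc, (hC.pow_pow k k).eq, ← mul_assoc, ← pow_succ']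
      _ = D := hDn k
end

section
/- Let X = G·A·A^D be the 1-D inverse of A. Then X is idempotent if and only if X = G·A^D, and also if and only if X = X·A. -/
theorem stmt10 {R : Type*} [Ring R] (A G D X : R) (hG : A * G * A = A)
    (hd2 : D * A * D = D) (hd3 : A * D = D * A)
    (hX : X = G * A * D) :
    (X * X = X ↔ X = G * D) ∧ (X * X = X ↔ X = X * A) := by
  have hAD2 : (A * D) * (A * D) = A * D := by
    rw [mul_assoc, ← mul_assoc D A D, hd2]
  have l1 : X * X = G * D := by
    rw [hX]
    calc G * A * D * (G * A * D)
        = G * (A * D) * (G * A * D) := by rw [mul_assoc G A D]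
      _ = G * (D * A) * (G * A * D) := by rw [hd3]
      _ = G * D * (A * G * A * D) := by simp only [mul_assoc]
      _ = G * D * (A * D) := by rw [hG]
      _ = G * (D * A * D) := by simp only [mul_assoc]
      _ = G * D := by rw [hd2]
  have l2 : X * (A * D) = X := by
    rw [hX]
    calc G * A * D * (A * D)
        = G * ((A * D) * (A * D)) := by simp only [mul_assoc]
      _ = G * (A * D) := by rw [hAD2]
      _ = G * A * D := by rw [mul_assoc]
  refine ⟨⟨fun h => h.symm.trans l1, fun h => l1.trans h.symm⟩, ?_, ?_⟩
  · intro h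
    have h1 : X = G * D := h.symm.trans l1
    have h2 : X * A = X := by
      calc X * A = G * D * A := by rw [h1]
        _ = G * (A * D) := by rw [mul_assoc, ← hd3]
        _ = X := by rw [hX, mul_assoc]
    exact h2.symm
  · intro h
    have hxd : X * D = X := by
      calc X * D = (X * A) * D := by rw [← h]
        _ = X * (A * D) := by rw [mul_assoc]
        _ = X := l2
    have hgd : X * D = G * D := by
      rw [hX]
      calc G * A * D * D
          = G * ((A * D) * D) := by simp only [mul_assoc]
        _ = G * ((D * A) * D) := by rw [hd3]
        _ = G * D := by rw [hd2]
    exact l1.trans (hgd.symm.trans hxd)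
end

section
/- Let X = G·A·A^D be the 1-D inverse of A of index k, and suppose X is idempotent. Then A^k = A^{k+1}, and consequently A^D·A^k = A^k. -/
theorem stmt11 {R : Type*} [Ring R] (A G D X : R) (k : ℕ) (hG : A * G * A = A)
    (hd1 : D * A ^ (k + 1) = A ^ k) (hd2 : D * A * D = D) (hd3 : A * D = D * A)
    (hX : X = G * A * D) (hidem : X * X = X) :
    A ^ k = A ^ (k + 1) ∧ D * A ^ k = A ^ k := by
  have hAX : A * X = A * D := by
    rw [hX, ← mul_assoc, ← mul_assoc, hG]
  have h1 : A * D * X = A * D := by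
    rw [← hAX, mul_assoc, hidem]
  have h2 : A * D * X = D := by
    calc A * D * X = D * A * (G * A * D) := by rw [hd3, hX]
    _ = D * (A * G * A) * D := by noncomm_ring
    _ = D := by rw [hG, hd2]
  have hAD : A * D = D := h1 ▸ h2
  have hk : A ^ k = A ^ (k + 1) := by
    calc A ^ k = D * A ^ (k + 1) := hd1.symm
    _ = A * D * A ^ (k + 1) := by rw [hAD]
    _ = A * A ^ k := by rw [mul_assoc, hd1]
    _ = A ^ (k + 1) := (pow_succ' A k).symm
  exact ⟨hk, by rw [← hk] at hd1; exact hd1⟩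
end

section
/- Let X = G·A·A^D be the 1-D inverse of A of index k, and suppose X is idempotent. Then A^k·X = A^k. -/
theorem stmt12 {R : Type*} [Ring R] (A G D X : R) (k : ℕ) (hG : A * G * A = A)
    (hd1 : D * A ^ (k + 1) = A ^ k) (hd2 : D * A * D = D) (hd3 : A * D = D * A)
    (hX : X = G * A * D) (hidem : X * X = X) :
    A ^ k * X = A ^ k := by
  have hc : Commute A D := hd3
  have hpc : A ^ (k + 1) * D = D * A ^ (k + 1) := ((hc.pow_left (k + 1)).eq)
  have hAX : A * X = A * D := by rw [hX, ← mul_assoc, ← mul_assoc, hG]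
  have h1 : A * X * X = A * X := by rw [mul_assoc, hidem]
  have hDX : D * X = D := by
    conv_lhs => rw [← hd2]
    rw [mul_assoc D A D, ← hAX, mul_assoc, h1, hAX, ← mul_assoc, hd2]
  calc A ^ k * X = A ^ (k + 1) * D * X := by rw [hpc, hd1]
    _ = A ^ (k + 1) * (D * X) := mul_assoc _ _ _
    _ = A ^ (k + 1) * D := by rw [hDX]
    _ = A ^ k := by rw [hpc, hd1]
end

section
/- Let X = G·A·A^D be the 1-D inverse of A. Then X·A = G·A if and only if A·A^D·A = A. -/
theorem stmt13 {R : Type*} [Ring R] (A G D X : R) (hG : A * G * A = A)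
    (hd2 : D * A * D = D) (hd3 : A * D = D * A)
    (hX : X = G * A * D) :
    X * A = G * A ↔ A * D * A = A := by
  subst hX
  constructor
  · intro h
    have h2 : A * (G * A * D * A) = A * (G * A) := by rw [h]
    calc A * D * A = A * G * A * D * A := by rw [hG]
      _ = A * (G * A * D * A) := by simp [mul_assoc]
      _ = A * (G * A) := h2
      _ = A := by rw [← mul_assoc, hG]
  · intro h
    calc G * A * D * A = G * (A * D * A) := by simp [mul_assoc]
      _ = G * A := by rw [h]
end

section
/- Let X = G·A·A^D be the 1-D inverse of A of index k. Then A^k·G·A^k = A^k if and only if A^k·X·A^k = A^k. -/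
theorem stmt14 {R : Type*} [Ring R] (A G D X : R) (k : ℕ) (hk : 1 ≤ k) (hG : A * G * A = A)
    (hd1 : D * A ^ (k + 1) = A ^ k) (hd2 : D * A * D = D) (hd3 : A * D = D * A)
    (hX : X = G * A * D) :
    A ^ k * G * A ^ k = A ^ k ↔ A ^ k * X * A ^ k = A ^ k := by
  have h : A * (D * A ^ k) = A ^ k := by
    rw [← mul_assoc, hd3, mul_assoc, ← pow_succ', hd1]
  have h2 : A ^ k * X * A ^ k = A ^ k * G * A ^ k := by
    rw [hX, show A ^ k * (G * A * D) * A ^ k = A ^ k * G * (A * (D * A ^ k)) by noncomm_ring, h]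
  rw [h2]
end

section
/- Let X = G·A·A^D be the 1-D inverse of A. Then X = A^D if and only if X·A = A·X. -/
theorem stmt15 {R : Type*} [Ring R] (A G D X : R) (k : ℕ) (hG : A * G * A = A)
    (hd1 : D * A ^ (k + 1) = A ^ k) (hd2 : D * A * D = D) (hd3 : A * D = D * A)
    (hX : X = G * A * D) :
    X = D ↔ X * A = A * X := by
  constructor
  · intro h; rw [h, hd3]
  · intro h
    have hAX : A * X = A * D := by
      rw [hX, show A * (G * A * D) = A * G * A * D by noncomm_ring, hG]
    calc X = X * A * D := by
            rw [hX]; nth_rewrite 1 [← hd2]; noncomm_ring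
      _ = A * D * D := by rw [h, hAX]
      _ = D := by rw [hd3, hd2]
end

section
/- Let G be a {1}-inverse of A and A† its Moore–Penrose inverse. Then X = G·A·A* is the unique solution of the system: X·(A†)*·X = X, A·X = A·A*, and X·(A†)* = G·A. -/
theorem stmt17 {R : Type*} [Ring R] [StarRing R] (A G Ap X : R) (hG : A * G * A = A)
    (hp1 : A * Ap * A = A) (hp2 : Ap * A * Ap = Ap)
    (hp3 : star (A * Ap) = A * Ap) (hp4 : star (Ap * A) = Ap * A)
    (hX : X = G * A * star A) :
    (X * star Ap * X = X ∧ A * X = A * star A ∧ X * star Ap = G * A) ∧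
    (∀ Y : R, Y * star Ap * Y = Y → A * Y = A * star A → Y * star Ap = G * A → Y = X) := by
  have h1 : star A * star Ap = Ap * A := by rw [← star_mul, hp4]
  have h3 : X * star Ap = G * A := by
    calc X * star Ap = G * A * (star A * star Ap) := by rw [hX, mul_assoc]
    _ = G * (A * Ap * A) := by rw [h1]; noncomm_ring
    _ = G * A := by rw [hp1]
  have h2 : A * X = A * star A := by
    calc A * X = A * G * A * star A := by rw [hX]; noncomm_ring
    _ = A * star A := by rw [hG]
  have hXX : X * star Ap * X = X := by
    calc X * star Ap * X = G * (A * X) := by rw [h3, mul_assoc]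
    _ = G * (A * star A) := by rw [h2]
    _ = X := by rw [hX, mul_assoc]
  refine ⟨⟨hXX, h2, h3⟩, fun Y hY1 hY2 hY3 => ?_⟩
  calc Y = Y * star Ap * Y := hY1.symm
  _ = G * (A * Y) := by rw [hY3, mul_assoc]
  _ = X := by rw [hY2, hX, mul_assoc]
end

section
/- Let X = G·A·A* be the 1-Star inverse of A. Then the following are equivalent: (i) A·A*·A = A; (ii) A·X·A = A; (iii) X·A·X = X. -/
theorem stmt18 {R : Type*} [Ring R] [StarRing R] (A G Ap X : R) (hG : A * G * A = A)
    (hp1 : A * Ap * A = A) (hp2 : Ap * A * Ap = Ap)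
    (hp3 : star (A * Ap) = A * Ap) (hp4 : star (Ap * A) = Ap * A)
    (hX : X = G * A * star A) :
    (A * star A * A = A ↔ A * X * A = A) ∧
    (A * star A * A = A ↔ X * A * X = X) := by
  subst hX
  have hsa : star A * star Ap = Ap * A := by rw [← star_mul, hp4]
  have key : A * (G * A * star A) * A = A * star A * A := by
    have h1 : A * (G * A * star A) * A = A * G * A * (star A * A) := by noncomm_ring
    rw [h1, hG, mul_assoc]
  refine ⟨⟨fun h => by rw [key, h], fun h => by rw [← key, h]⟩, ?_, ?_⟩
  · intro h
    have h1 : G * A * star A * A * (G * A * star A)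
        = G * (A * star A * A) * G * A * star A := by noncomm_ring
    rw [h1, h]
    have h2 : G * A * G * A * star A = G * (A * G * A) * star A := by noncomm_ring
    rw [h2, hG]
  · intro h
    have e : A * (G * A * star A * A * (G * A * star A)) = A * (G * A * star A) :=
      congrArg (A * ·) h
    have e1 : A * star A * A * G * A * star A = A * star A := by
      have l : A * (G * A * star A * A * (G * A * star A))
          = A * G * A * star A * A * G * A * star A := by noncomm_ring
      have r : A * (G * A * star A) = A * G * A * star A := by noncomm_ring
      rw [l, r, hG] at e
      exact e
    have e2 := congrArg (· * star Ap) e1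
    have l2 : A * star A * A * G * A * star A * star Ap
        = A * star A * A * G * (A * (star A * star Ap)) := by noncomm_ring
    have r2 : A * star A * star Ap = A * (star A * star Ap) := by noncomm_ring
    rw [l2, r2, hsa] at e2
    have l3 : A * star A * A * G * (A * (Ap * A)) = A * star A * (A * G * (A * Ap * A)) := by
      noncomm_ring
    rw [l3, hp1, hG] at e2
    have r3 : A * (Ap * A) = A * Ap * A := by noncomm_ring
    rw [r3, hp1] at e2
    exact e2
end

section
/- If U = G·A·A* and V = H·A·A* are two 1-Star inverses of A (with G, H two {1}-inverses of A), then U·(A†)*·V = G·A·A*, which is again a 1-Star inverse of A; hence the set of 1-Star inverses is closed under the product (U,V) ↦ U·(A†)*·V. -/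
theorem stmt19 {R : Type*} [Ring R] [StarRing R] (A G H Ap U V : R)
    (hG : A * G * A = A) (hH : A * H * A = A)
    (hp1 : A * Ap * A = A) (hp2 : Ap * A * Ap = Ap)
    (hp3 : star (A * Ap) = A * Ap) (hp4 : star (Ap * A) = Ap * A)
    (hU : U = G * A * star A) (hV : V = H * A * star A) :
    U * star Ap * V = G * A * star A := by
  subst hU hV
  have h1 : star A * star Ap = Ap * A := by rw [← star_mul, hp4]
  calc G * A * star A * star Ap * (H * A * star A)
      = G * (A * Ap * A) * (H * A) * star A := by
        rw [show G * A * star A * star Ap = G * A * (star A * star Ap) by noncomm_ring,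
          h1]; noncomm_ring
    _ = G * (A * H * A) * star A := by rw [hp1]; noncomm_ring
    _ = G * A * star A := by rw [hH]
end
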